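/- arXiv:2308.04061 — 4 statements merged into one kernel-verified Lean document; each statement's English description precedes it below -/
import Mathlib

section
/- First robust risk upper bound (Theorem 3.1): R_rob(θ) ≤ E 1{Y ≠ F_θ(X)} + E_X [ 1{F_θ(X) ≠ F_θ(z(X))} · P(Y ≠ F_θ(z(X)) | X) ]. -/
open MeasureTheory Classical

noncomputable def ind (p : Prop) : ℝ := if p then 1 else 0

/-- First robust risk upper bound (Theorem 3.1):
`R_rob(θ) ≤ E 1{Y ≠ F(X)} + E_X [ 1{F(X) ≠ F(z(X))} ⬝ P(Y ≠ F(z(X)) | X) ]`.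
Here `q x = P(Y ≠ F(z x) | X = x)` is characterized by the tower-property
hypothesis `hq`. -/
theorem robust_risk_upper_bound_one
    {Ω 𝒳 𝒴 : Type*} [MeasurableSpace Ω]
    (μ : Measure Ω) [IsProbabilityMeasure μ]
    (X : Ω → 𝒳) (Y : Ω → 𝒴) (F : 𝒳 → 𝒴) (B : 𝒳 → Set 𝒳) (z : 𝒳 → 𝒳)
    (hB : ∀ x, x ∈ B x)
    (hz : ∀ x, z x ∈ B x)
    (hzmax : ∀ x, ∀ x' ∈ B x, F x ≠ F x' → F x ≠ F (z x))
    (q : 𝒳 → ℝ)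
    (hq : ∫ ω, ind (F (X ω) ≠ F (z (X ω))) * ind (Y ω ≠ F (z (X ω))) ∂μ
        = ∫ ω, ind (F (X ω) ≠ F (z (X ω))) * q (X ω) ∂μ)
    (hnat : Integrable (fun ω => ind (F (X ω) ≠ Y ω)) μ)
    (hInt : Integrable
      (fun ω => ind (F (X ω) ≠ F (z (X ω))) * ind (Y ω ≠ F (z (X ω)))) μ) :
    ∫ ω, ind (∃ x' ∈ B (X ω), F x' ≠ Y ω) ∂μ
      ≤ ∫ ω, ind (F (X ω) ≠ Y ω) ∂μ
        + ∫ ω, ind (F (X ω) ≠ F (z (X ω))) * q (X ω) ∂μ := by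
  rw [← hq, ← integral_add hnat hInt]
  apply integral_mono_of_nonneg
  · filter_upwards with ω
    unfold ind; positivity
  · exact hnat.add hInt
  · filter_upwards with ω
    simp only [ind]
    by_cases h : ∃ x' ∈ B (X ω), F x' ≠ Y ω
    · rw [if_pos h]
      by_cases hFY : F (X ω) ≠ Y ω
      · rw [if_pos hFY]
        split_ifs <;> norm_num
      · push_neg at hFY
        obtain ⟨x', hx', hne⟩ := h
        have hFz : F (X ω) ≠ F (z (X ω)) := hzmax (X ω) x' hx' (hFY ▸ hne.symm)
        have hYz : Y ω ≠ F (z (X ω)) := hFY ▸ hFz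
        rw [if_pos hFz, if_pos hYz]
        split_ifs <;> norm_num
    · rw [if_neg h]
      split_ifs <;> norm_num
end

section
/- Second robust risk upper bound (Theorem 3.2): R_rob(θ) ≤ E 1{Y ≠ F_θ(X)} + E_X [ 1{F_θ(X) ≠ F_θ(z(X))} · P(Y = F_θ(X) | X) ]. -/
open MeasureTheory Classical

lemma ind_le_aux (p q r s : Prop) (h : p → ¬q → r ∧ s) :
    ind p ≤ ind q + ind r * ind s := by
  unfold ind
  split_ifs <;> simp_all

/-- Second robust risk upper bound (Theorem 3.2):
`R_rob(θ) ≤ E 1{Y ≠ F(X)} + E_X [ 1{F(X) ≠ F(z(X))} ⬝ P(Y = F(X) | X) ]`.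
Here `q x = P(Y = F x | X = x)` is characterized by the tower-property
hypothesis `hq`. -/
theorem robust_risk_upper_bound_two
    {Ω 𝒳 𝒴 : Type*} [MeasurableSpace Ω]
    (μ : Measure Ω) [IsProbabilityMeasure μ]
    (X : Ω → 𝒳) (Y : Ω → 𝒴) (F : 𝒳 → 𝒴) (B : 𝒳 → Set 𝒳) (z : 𝒳 → 𝒳)
    (hB : ∀ x, x ∈ B x)
    (hz : ∀ x, z x ∈ B x)
    (hzmax : ∀ x, ∀ x' ∈ B x, F x ≠ F x' → F x ≠ F (z x))
    (q : 𝒳 → ℝ)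
    (hq : ∫ ω, ind (F (X ω) ≠ F (z (X ω))) * ind (Y ω = F (X ω)) ∂μ
        = ∫ ω, ind (F (X ω) ≠ F (z (X ω))) * q (X ω) ∂μ)
    (hnat : Integrable (fun ω => ind (F (X ω) ≠ Y ω)) μ)
    (hInt : Integrable
      (fun ω => ind (F (X ω) ≠ F (z (X ω))) * ind (Y ω = F (X ω))) μ) :
    ∫ ω, ind (∃ x' ∈ B (X ω), F x' ≠ Y ω) ∂μ
      ≤ ∫ ω, ind (F (X ω) ≠ Y ω) ∂μ
        + ∫ ω, ind (F (X ω) ≠ F (z (X ω))) * q (X ω) ∂μ := by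
  rw [← hq, ← integral_add hnat hInt]
  refine integral_mono_of_nonneg ?_ (hnat.add hInt) ?_
  · filter_upwards with ω
    unfold ind; positivity
  · filter_upwards with ω
    refine ind_le_aux _ _ _ _ ?_
    rintro ⟨x', hx', hfx'⟩ hne
    push_neg at hne
    exact ⟨hzmax _ _ hx' (fun e => hfx' (e ▸ hne)), hne.symm⟩
end

section
/- Binary surrogate bound (inequality (4)): for 𝒴 = {-1,1} and any λ > 0, R_rob(θ) ≤ E φ(Y f_θ(X)) + E_X [ φ(f_θ(X) f_θ(z(X)) / λ) · P(Y ≠ F_θ(z(X)) | X) ], where φ is any surrogate loss satisfying φ(t) ≥ 1{t ≤ 0} for all t (e.g., the binary cross-entropy φ(t) = log(1 + e^{-t})). -/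
open MeasureTheory Classical

lemma ind_nonneg (p : Prop) : 0 ≤ ind p := by
  unfold ind; split <;> norm_num

lemma ind_le_one (p : Prop) : ind p ≤ 1 := by
  unfold ind; split <;> norm_num

/-- Binary surrogate bound (inequality (4)): for `𝒴 = {-1,1}` and any `λ > 0`,
`R_rob(θ) ≤ E φ(Y f(X)) + E_X [ φ(f(X) f(z(X)) / λ) ⬝ P(Y ≠ F(z(X)) | X) ]`
for any surrogate loss `φ` with `φ(t) ≥ 1{t ≤ 0}`.
Here `F x = sign (f x)` and `q x = P(Y ≠ F(z x) | X = x)` is characterized by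
the tower-property hypothesis `hq`. -/
theorem binary_surrogate_bound_one
    {Ω 𝒳 : Type*} [MeasurableSpace Ω]
    (μ : Measure Ω) [IsProbabilityMeasure μ]
    (X : Ω → 𝒳) (Y : Ω → ℤ) (hY : ∀ ω, Y ω = 1 ∨ Y ω = -1)
    (f : 𝒳 → ℝ) (F : 𝒳 → ℤ)
    (hF : ∀ x, F x = if 0 < f x then 1 else -1)
    (B : 𝒳 → Set 𝒳) (z : 𝒳 → 𝒳)
    (hB : ∀ x, x ∈ B x)
    (hz : ∀ x, z x ∈ B x)
    (hzmax : ∀ x, ∀ x' ∈ B x, F x ≠ F x' → F x ≠ F (z x))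
    (φ : ℝ → ℝ) (hφ : ∀ t : ℝ, ind (t ≤ 0) ≤ φ t)
    (l : ℝ) (hl : 0 < l)
    (q : 𝒳 → ℝ) (hq0 : ∀ x, 0 ≤ q x)
    (hq : ∫ ω, ind (F (X ω) ≠ F (z (X ω))) * ind (Y ω ≠ F (z (X ω))) ∂μ
        = ∫ ω, ind (F (X ω) ≠ F (z (X ω))) * q (X ω) ∂μ)
    (h1 : Integrable (fun ω => φ ((Y ω : ℝ) * f (X ω))) μ)
    (h2 : Integrable (fun ω => φ (f (X ω) * f (z (X ω)) / l) * q (X ω)) μ)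
    (hnat : Integrable (fun ω => ind (F (X ω) ≠ Y ω)) μ)
    (hInt : Integrable
      (fun ω => ind (F (X ω) ≠ F (z (X ω))) * ind (Y ω ≠ F (z (X ω)))) μ) :
    ∫ ω, ind (∃ x' ∈ B (X ω), F x' ≠ Y ω) ∂μ
      ≤ ∫ ω, φ ((Y ω : ℝ) * f (X ω)) ∂μ
        + ∫ ω, φ (f (X ω) * f (z (X ω)) / l) * q (X ω) ∂μ := by
  have hφ0 : ∀ t : ℝ, 0 ≤ φ t := fun t => le_trans (ind_nonneg _) (hφ t)
  -- φ dominates the indicator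
  have hφind : ∀ (p : Prop) (t : ℝ), (p → t ≤ 0) → ind p ≤ φ t := by
    intro p t h
    by_cases hp : p
    · have : ind (t ≤ 0) = 1 := by simp [ind, h hp]
      calc ind p ≤ 1 := ind_le_one p
        _ = ind (t ≤ 0) := this.symm
        _ ≤ φ t := hφ t
    · simp [ind, hp]; exact hφ0 t
  -- sign facts
  have sign1 : ∀ ω, F (X ω) ≠ Y ω → (Y ω : ℝ) * f (X ω) ≤ 0 := by
    intro ω h
    rcases hY ω with hy | hy <;> rw [hy] <;> rw [hy, hF] at h
    · by_cases hp : 0 < f (X ω)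
      · simp [hp] at h
      · push_neg at hp; push_cast; linarith
    · by_cases hp : 0 < f (X ω)
      · push_cast; nlinarith
      · simp [hp] at h
  have sign2 : ∀ x, F x ≠ F (z x) → f x * f (z x) / l ≤ 0 := by
    intro x h
    rw [hF, hF] at h
    apply div_nonpos_of_nonpos_of_nonneg _ hl.le
    by_cases hp : 0 < f x <;> by_cases hp' : 0 < f (z x) <;>
      simp [hp, hp'] at h ⊢ <;> nlinarith
  -- pointwise key inequality
  have key : ∀ ω, ind (∃ x' ∈ B (X ω), F x' ≠ Y ω)
      ≤ ind (F (X ω) ≠ Y ω)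
        + ind (F (X ω) ≠ F (z (X ω))) * ind (Y ω ≠ F (z (X ω))) := by
    intro ω
    by_cases h : ∃ x' ∈ B (X ω), F x' ≠ Y ω
    · obtain ⟨x', hx', hne⟩ := h
      by_cases hF1 : F (X ω) ≠ Y ω
      · have : ind (∃ x' ∈ B (X ω), F x' ≠ Y ω) = 1 := by
          simp [ind]; exact ⟨x', hx', hne⟩
        rw [this]
        have h0 : ind (F (X ω) ≠ Y ω) = 1 := by simp [ind, hF1]
        nlinarith [ind_nonneg (F (X ω) ≠ F (z (X ω))),
          ind_nonneg (Y ω ≠ F (z (X ω)))]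
      · push_neg at hF1
        have h2 : F (X ω) ≠ F x' := by rw [hF1]; exact fun e => hne e.symm
        have h3 := hzmax (X ω) x' hx' h2
        have h4 : Y ω ≠ F (z (X ω)) := hF1 ▸ h3
        have : ind (∃ x' ∈ B (X ω), F x' ≠ Y ω) = 1 := by
          simp [ind]; exact ⟨x', hx', hne⟩
        rw [this]
        simp [ind, h3, h4]
        split <;> norm_num
    · simp [ind, h]
      positivity <;> exact add_nonneg (ind_nonneg _)
        (mul_nonneg (ind_nonneg _) (ind_nonneg _))
  -- integrate key inequality
  have step1 : ∫ ω, ind (∃ x' ∈ B (X ω), F x' ≠ Y ω) ∂μ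
      ≤ ∫ ω, (ind (F (X ω) ≠ Y ω)
        + ind (F (X ω) ≠ F (z (X ω))) * ind (Y ω ≠ F (z (X ω)))) ∂μ := by
    apply integral_mono_of_nonneg
    · exact Filter.Eventually.of_forall fun ω => ind_nonneg _
    · exact hnat.add hInt
    · exact Filter.Eventually.of_forall key
  rw [integral_add hnat hInt, hq] at step1
  have step2 : ∫ ω, ind (F (X ω) ≠ Y ω) ∂μ ≤ ∫ ω, φ ((Y ω : ℝ) * f (X ω)) ∂μ := by
    apply integral_mono_of_nonneg
    · exact Filter.Eventually.of_forall fun ω => ind_nonneg _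
    · exact h1
    · exact Filter.Eventually.of_forall fun ω => hφind _ _ (sign1 ω)
  have step3 : ∫ ω, ind (F (X ω) ≠ F (z (X ω))) * q (X ω) ∂μ
      ≤ ∫ ω, φ (f (X ω) * f (z (X ω)) / l) * q (X ω) ∂μ := by
    apply integral_mono_of_nonneg
    · exact Filter.Eventually.of_forall fun ω =>
        mul_nonneg (ind_nonneg _) (hq0 _)
    · exact h2
    · exact Filter.Eventually.of_forall fun ω =>
        mul_le_mul_of_nonneg_right (hφind _ _ (sign2 (X ω))) (hq0 _)
  linarith
end

section
/- Binary surrogate bound (inequality (5)): for 𝒴 = {-1,1} and any λ > 0, R_rob(θ) ≤ E φ(Y f_θ(X)) + E_X [ φ(f_θ(X) f_θ(z(X)) / λ) · P(Y = F_θ(X) | X) ], where φ satisfies φ(t) ≥ 1{t ≤ 0} for all t. -/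
open MeasureTheory Classical

lemma ind_le_ind {p q : Prop} (h : p → q) : ind p ≤ ind q := by
  unfold ind; split
  · simp [*]
  · exact ind_nonneg q

/-- Binary surrogate bound (inequality (5)): for `𝒴 = {-1,1}` and any `λ > 0`,
`R_rob(θ) ≤ E φ(Y f(X)) + E_X [ φ(f(X) f(z(X)) / λ) ⬝ P(Y = F(X) | X) ]`
for any surrogate loss `φ` with `φ(t) ≥ 1{t ≤ 0}`.
Here `F x = sign (f x)` and `q x = P(Y = F x | X = x)` is characterized by
the tower-property hypothesis `hq`. -/
theorem binary_surrogate_bound_two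
    {Ω 𝒳 : Type*} [MeasurableSpace Ω]
    (μ : Measure Ω) [IsProbabilityMeasure μ]
    (X : Ω → 𝒳) (Y : Ω → ℤ) (hY : ∀ ω, Y ω = 1 ∨ Y ω = -1)
    (f : 𝒳 → ℝ) (F : 𝒳 → ℤ)
    (hF : ∀ x, F x = if 0 < f x then 1 else -1)
    (B : 𝒳 → Set 𝒳) (z : 𝒳 → 𝒳)
    (hB : ∀ x, x ∈ B x)
    (hz : ∀ x, z x ∈ B x)
    (hzmax : ∀ x, ∀ x' ∈ B x, F x ≠ F x' → F x ≠ F (z x))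
    (φ : ℝ → ℝ) (hφ : ∀ t : ℝ, ind (t ≤ 0) ≤ φ t)
    (l : ℝ) (hl : 0 < l)
    (q : 𝒳 → ℝ) (hq0 : ∀ x, 0 ≤ q x)
    (hq : ∫ ω, ind (F (X ω) ≠ F (z (X ω))) * ind (Y ω = F (X ω)) ∂μ
        = ∫ ω, ind (F (X ω) ≠ F (z (X ω))) * q (X ω) ∂μ)
    (h1 : Integrable (fun ω => φ ((Y ω : ℝ) * f (X ω))) μ)
    (h2 : Integrable (fun ω => φ (f (X ω) * f (z (X ω)) / l) * q (X ω)) μ)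
    (hnat : Integrable (fun ω => ind (F (X ω) ≠ Y ω)) μ)
    (hInt : Integrable
      (fun ω => ind (F (X ω) ≠ F (z (X ω))) * ind (Y ω = F (X ω))) μ) :
    ∫ ω, ind (∃ x' ∈ B (X ω), F x' ≠ Y ω) ∂μ
      ≤ ∫ ω, φ ((Y ω : ℝ) * f (X ω)) ∂μ
        + ∫ ω, φ (f (X ω) * f (z (X ω)) / l) * q (X ω) ∂μ := by
  -- pointwise sign facts
  have hsign1 : ∀ ω, ind (F (X ω) ≠ Y ω) ≤ φ ((Y ω : ℝ) * f (X ω)) := by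
    intro ω
    refine le_trans (ind_le_ind ?_) (hφ _)
    intro h
    rw [hF] at h
    rcases hY ω with hy | hy <;> rw [hy] at h ⊢ <;>
      by_cases hf : 0 < f (X ω) <;> simp only [hf, if_true, if_false] at h <;>
      push_cast <;>
      first
        | exact absurd rfl h
        | nlinarith [hf]
        | nlinarith [le_of_not_gt hf]
  have hsign2 : ∀ ω, ind (F (X ω) ≠ F (z (X ω))) ≤ φ (f (X ω) * f (z (X ω)) / l) := by
    intro ω
    refine le_trans (ind_le_ind ?_) (hφ _)
    intro h
    rw [hF, hF] at h
    apply div_nonpos_of_nonpos_of_nonneg _ hl.le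
    by_cases ha : 0 < f (X ω) <;> by_cases hb : 0 < f (z (X ω)) <;>
      simp only [ha, hb, if_true, if_false] at h <;>
      first
        | exact absurd rfl h
        | nlinarith [ha, le_of_not_gt hb]
        | nlinarith [le_of_not_gt ha, hb]
  have hle : ∀ ω, ind (∃ x' ∈ B (X ω), F x' ≠ Y ω)
      ≤ ind (F (X ω) ≠ Y ω) + ind (F (X ω) ≠ F (z (X ω))) * ind (Y ω = F (X ω)) := by
    intro ω
    by_cases h : ∃ x' ∈ B (X ω), F x' ≠ Y ω
    · have hL : ind (∃ x' ∈ B (X ω), F x' ≠ Y ω) = 1 := if_pos h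
      obtain ⟨x', hx', hne⟩ := h
      by_cases hfy : F (X ω) = Y ω
      · have hzz : F (X ω) ≠ F (z (X ω)) := by
          refine hzmax _ _ hx' ?_
          intro hc; exact hne (hc ▸ hfy)
        have e1 : ind (F (X ω) ≠ Y ω) = 0 := by simp [ind, hfy]
        have e2 : ind (F (X ω) ≠ F (z (X ω))) = 1 := if_pos hzz
        have e3 : ind (Y ω = F (X ω)) = 1 := if_pos hfy.symm
        rw [hL, e1, e2, e3]; norm_num
      · have h1' : ind (F (X ω) ≠ Y ω) = 1 := by simp [ind, hfy]
        rw [hL, h1']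
        have := mul_nonneg (ind_nonneg (F (X ω) ≠ F (z (X ω)))) (ind_nonneg (Y ω = F (X ω)))
        linarith
    · have : ind (∃ x' ∈ B (X ω), F x' ≠ Y ω) = 0 := by simp [ind, h]
      rw [this]
      have := mul_nonneg (ind_nonneg (F (X ω) ≠ F (z (X ω)))) (ind_nonneg (Y ω = F (X ω)))
      have := ind_nonneg (F (X ω) ≠ Y ω)
      linarith
  calc ∫ ω, ind (∃ x' ∈ B (X ω), F x' ≠ Y ω) ∂μ
      ≤ ∫ ω, (ind (F (X ω) ≠ Y ω) + ind (F (X ω) ≠ F (z (X ω))) * ind (Y ω = F (X ω))) ∂μ := by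
        apply integral_mono_of_nonneg
        · exact Filter.Eventually.of_forall fun ω => ind_nonneg _
        · exact hnat.add hInt
        · exact Filter.Eventually.of_forall hle
    _ = (∫ ω, ind (F (X ω) ≠ Y ω) ∂μ)
        + ∫ ω, ind (F (X ω) ≠ F (z (X ω))) * ind (Y ω = F (X ω)) ∂μ :=
        integral_add hnat hInt
    _ = (∫ ω, ind (F (X ω) ≠ Y ω) ∂μ)
        + ∫ ω, ind (F (X ω) ≠ F (z (X ω))) * q (X ω) ∂μ := by rw [hq]
    _ ≤ (∫ ω, φ ((Y ω : ℝ) * f (X ω)) ∂μ)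
        + ∫ ω, φ (f (X ω) * f (z (X ω)) / l) * q (X ω) ∂μ := by
        apply add_le_add
        · exact integral_mono_of_nonneg
            (Filter.Eventually.of_forall fun ω => ind_nonneg _) h1
            (Filter.Eventually.of_forall hsign1)
        · exact integral_mono_of_nonneg
            (Filter.Eventually.of_forall fun ω =>
              mul_nonneg (ind_nonneg _) (hq0 _)) h2
            (Filter.Eventually.of_forall fun ω =>
              mul_le_mul_of_nonneg_right (hsign2 ω) (hq0 _))
end
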